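/- arXiv:2502.19362 — 3 statements merged into one kernel-verified Lean document; each statement's English description precedes it below -/
import Mathlib

section
/- For any complex number x with Im(x) > 0 and any positive integer n, |cot(πnx) - (-i)| ≤ 2/(e^{2πn·Im(x)} - 1). -/
open Real

/- With q = exp (2 i z) one has cot z + i = 2q / (i (1 - q)), and |q| = exp (-2 Im z) < 1 when
Im z > 0; bounding |1 - q| from below by 1 - |q| gives 2|q| / (1 - |q|) = 2 / (exp (2 Im z) - 1). -/

lemma norm_div_one_sub_le {𝕜 : Type*} [NormedDivisionRing 𝕜] {q : 𝕜} (hq : ‖q‖ < 1) :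
    ‖q / (1 - q)‖ ≤ ‖q‖ / (1 - ‖q‖) := by
  have hden : 1 - ‖q‖ ≤ ‖1 - q‖ := by simpa using norm_sub_norm_le (1 : 𝕜) q
  rw [norm_div]
  exact div_le_div_of_nonneg_left (norm_nonneg q) (by linarith) hden

namespace Complex

lemma cot_add_I_eq {z : ℂ} (hz : exp (2 * I * z) ≠ 1) :
    cot z + I = 2 / I * (exp (2 * I * z) / (1 - exp (2 * I * z))) := by
  have hsub : 1 - exp (2 * I * z) ≠ 0 := sub_ne_zero.mpr hz.symm
  rw [cot_eq_exp_ratio]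
  field_simp
  ring_nf
  rw [I_sq]
  ring

lemma norm_exp_two_mul_I_mul (z : ℂ) : ‖exp (2 * I * z)‖ = Real.exp (-(2 * z.im)) := by
  rw [norm_exp]
  simp

lemma norm_cot_add_I_le {z : ℂ} (hz : 0 < z.im) :
    ‖cot z + I‖ ≤ 2 / (Real.exp (2 * z.im) - 1) := by
  have hq : ‖exp (2 * I * z)‖ < 1 := by
    rw [norm_exp_two_mul_I_mul, Real.exp_lt_one_iff]
    linarith
  have hq1 : exp (2 * I * z) ≠ 1 := fun h => by simp [h] at hq
  have hexp : 1 < Real.exp (2 * z.im) := Real.one_lt_exp_iff.mpr (by linarith)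
  calc ‖cot z + I‖ = 2 * ‖exp (2 * I * z) / (1 - exp (2 * I * z))‖ := by
        rw [cot_add_I_eq hq1, norm_mul, norm_div, norm_I, Complex.norm_two, div_one]
    _ ≤ 2 * (Real.exp (-(2 * z.im)) / (1 - Real.exp (-(2 * z.im)))) := by
        rw [← norm_exp_two_mul_I_mul]
        gcongr
        exact norm_div_one_sub_le hq
    _ = 2 / (Real.exp (2 * z.im) - 1) := by
        rw [Real.exp_neg]
        field_simp [(sub_pos.mpr hexp).ne']

end Complex

theorem stmt0 (x : ℂ) (hx : 0 < x.im) (n : ℕ) (hn : 0 < n) :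
    ‖Complex.cot (π * n * x) - (-Complex.I)‖ ≤
      2 / (Real.exp (2 * π * n * x.im) - 1) := by
  have him : (π * n * x : ℂ).im = π * n * x.im := by simp
  have hpos : 0 < (π * n * x : ℂ).im := by rw [him]; positivity
  rw [sub_neg_eq_add, mul_assoc 2, mul_assoc 2, ← him]
  exact Complex.norm_cot_add_I_le hpos
end

section
/- Let p ∈ (0,1), let S_n be a binomial random variable with parameters n and p, and define e_n = E[(√(S_n/n) - √p)²]. Then n·e_n → (1-p)/4 as n → ∞. -/
/-!
With `x = S_n / n`, the identity `√x - √p = (x - p) / (√x + √p)` gives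
`(√x - √p)² = (x - p)² / (4p) + O(|x - p|³)` uniformly in `x ≥ 0`. The quadratic term has mean
`p(1 - p) / (4pn) = (1 - p) / (4n)`. By Cauchy–Schwarz the mean of the cubic error is at most the
geometric mean of the second and fourth central moments, which are `O(1/n)` and `O(1/n²)`, so it is
`O(n^(-3/2))`. The central moments are computed from the factorial moments
`E[S_n (S_n - 1) ⋯ (S_n - j + 1)] = n (n - 1) ⋯ (n - j + 1) pʲ`.
-/

open Filter Finset

theorem sum_descFactorial_mul_choose_mul_pow_mul_pow {R : Type*} [CommSemiring R] (x y : R)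
    (j n : ℕ) :
    ∑ k ∈ range (n + 1), (k.descFactorial j : R) * n.choose k * x ^ k * y ^ (n - k) =
      n.descFactorial j * x ^ j * (x + y) ^ (n - j) := by
  induction j generalizing n with
  | zero =>
    simp only [Nat.descFactorial_zero, Nat.cast_one, one_mul, pow_zero, Nat.sub_zero, add_pow]
    exact sum_congr rfl fun k _ => by ring
  | succ j ih =>
    cases n with
    | zero => simp
    | succ n =>
      have hcoeff (i : ℕ) : (i + 1).descFactorial (j + 1) * (n + 1).choose (i + 1) =
          (n + 1) * (i.descFactorial j * n.choose i) := by
        rw [Nat.succ_descFactorial_succ, mul_left_comm (n + 1), Nat.add_one_mul_choose_eq]; ring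
      rw [sum_range_succ']
      simp only [Nat.zero_descFactorial_succ, Nat.cast_zero, zero_mul, add_zero,
        Nat.add_sub_add_right]
      calc _ = ∑ i ∈ range (n + 1), ((n + 1 : ℕ) : R) * x *
              ((i.descFactorial j : R) * n.choose i * x ^ i * y ^ (n - i)) :=
            sum_congr rfl fun i _ => by rw [← Nat.cast_mul, hcoeff]; push_cast; ring
        _ = _ := by rw [← mul_sum, ih, Nat.succ_descFactorial_succ]; push_cast; ring

theorem Nat.cast_descFactorial_three {R : Type*} [CommRing R] (k : ℕ) :
    (k.descFactorial 3 : R) = k * (k - 1) * (k - 2) := by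
  rw [← descPochhammer_eval_eq_descFactorial]; simp [descPochhammer_succ_right]

theorem Nat.cast_descFactorial_four {R : Type*} [CommRing R] (k : ℕ) :
    (k.descFactorial 4 : R) = k * (k - 1) * (k - 2) * (k - 3) := by
  rw [← descPochhammer_eval_eq_descFactorial]; simp [descPochhammer_succ_right]

theorem abs_sq_sqrt_sub_sqrt_sub_sq_div_le {x p : ℝ} (hx : 0 ≤ x) (hp : 0 < p) :
    |(√x - √p) ^ 2 - (x - p) ^ 2 / (4 * p)| ≤ 3 / (4 * p ^ 2) * |x - p| ^ 3 := by
  set s := √x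
  set r := √p
  have hs : 0 ≤ s := Real.sqrt_nonneg x
  have hr : 0 < r := Real.sqrt_pos.mpr hp
  rw [← Real.sq_sqrt hx, ← Real.sq_sqrt hp.le]
  -- `4r² - (s + r)² = (r - s)(3r + s)`
  have hdiff : (s - r) ^ 2 - (s ^ 2 - r ^ 2) ^ 2 / (4 * r ^ 2) =
      (r - s) ^ 3 * ((3 * r + s) / (4 * r ^ 2)) := by
    field_simp; ring
  have hsq : |s ^ 2 - r ^ 2| = |r - s| * (s + r) := by
    rw [abs_sub_comm, show r ^ 2 - s ^ 2 = (r - s) * (s + r) by ring, abs_mul,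
      abs_of_nonneg (by positivity : 0 ≤ s + r)]
  have hfactor : (3 * r + s) / (4 * r ^ 2) ≤ 3 / (4 * (r ^ 2) ^ 2) * (s + r) ^ 3 := by
    rw [div_mul_eq_mul_div, div_le_div_iff₀ (by positivity) (by positivity)]
    have : r ^ 2 ≤ (s + r) ^ 2 := by gcongr; linarith
    nlinarith [mul_le_mul (by linarith : 3 * r + s ≤ 3 * (s + r)) this (by positivity)
      (by positivity), pow_pos hr 2]
  rw [hdiff, hsq, abs_mul, abs_pow, abs_of_nonneg (by positivity : 0 ≤ (3 * r + s) / (4 * r ^ 2)),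
    mul_pow, mul_left_comm]
  exact mul_le_mul_of_nonneg_left hfactor (by positivity)

def binomialWeight (n : ℕ) (p : ℝ) (k : ℕ) : ℝ := n.choose k * p ^ k * (1 - p) ^ (n - k)

section binomialWeight

variable (n : ℕ) (p : ℝ)

theorem binomialWeight_nonneg (hp₀ : 0 ≤ p) (hp₁ : p ≤ 1) (k : ℕ) :
    0 ≤ binomialWeight n p k := by
  have : 0 ≤ 1 - p := sub_nonneg.mpr hp₁
  unfold binomialWeight; positivity

theorem sum_descFactorial_mul_binomialWeight (j : ℕ) :
    ∑ k ∈ range (n + 1), (k.descFactorial j : ℝ) * binomialWeight n p k =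
      n.descFactorial j * p ^ j := by
  have h := sum_descFactorial_mul_choose_mul_pow_mul_pow p (1 - p) j n
  rw [add_sub_cancel, one_pow, mul_one] at h
  rw [← h]
  exact sum_congr rfl fun k _ => by unfold binomialWeight; ring

theorem sum_sub_sq_mul_binomialWeight :
    ∑ k ∈ range (n + 1), ((k : ℝ) - n * p) ^ 2 * binomialWeight n p k = n * p * (1 - p) := by
  set c : ℝ := n * p with hc
  have hexpand (k : ℕ) : ((k : ℝ) - c) ^ 2 = k.descFactorial 2 + (1 - 2 * c) * k.descFactorial 1
      + c ^ 2 * k.descFactorial 0 := by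
    rw [Nat.cast_descFactorial_two, Nat.descFactorial_one, Nat.descFactorial_zero]; push_cast; ring
  simp only [hexpand, add_mul, sum_add_distrib, mul_assoc, ← mul_sum,
    sum_descFactorial_mul_binomialWeight]
  rw [Nat.cast_descFactorial_two, Nat.descFactorial_one, Nat.descFactorial_zero, hc]
  push_cast; ring

theorem sum_sub_pow_four_mul_binomialWeight :
    ∑ k ∈ range (n + 1), ((k : ℝ) - n * p) ^ 4 * binomialWeight n p k =
      3 * n ^ 2 * p ^ 2 * (1 - p) ^ 2 + n * p * (1 - p) * (1 - 6 * p * (1 - p)) := by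
  set c : ℝ := n * p with hc
  have hexpand (k : ℕ) : ((k : ℝ) - c) ^ 4 = k.descFactorial 4 + (6 - 4 * c) * k.descFactorial 3
      + (7 - 12 * c + 6 * c ^ 2) * k.descFactorial 2
      + (1 - 4 * c + 6 * c ^ 2 - 4 * c ^ 3) * k.descFactorial 1 + c ^ 4 * k.descFactorial 0 := by
    rw [Nat.cast_descFactorial_four, Nat.cast_descFactorial_three, Nat.cast_descFactorial_two,
      Nat.descFactorial_one, Nat.descFactorial_zero]
    push_cast; ring
  simp only [hexpand, add_mul, sum_add_distrib, mul_assoc, ← mul_sum,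
    sum_descFactorial_mul_binomialWeight]
  rw [Nat.cast_descFactorial_four, Nat.cast_descFactorial_three, Nat.cast_descFactorial_two,
    Nat.descFactorial_one, Nat.descFactorial_zero, hc]
  push_cast; ring

theorem sum_div_sub_sq_mul_binomialWeight (hn : n ≠ 0) :
    ∑ k ∈ range (n + 1), ((k : ℝ) / n - p) ^ 2 * binomialWeight n p k = p * (1 - p) / n := by
  have hn' : (n : ℝ) ≠ 0 := Nat.cast_ne_zero.mpr hn
  have hscale (k : ℕ) : ((k : ℝ) / n - p) ^ 2 = ((k : ℝ) - n * p) ^ 2 / n ^ 2 := by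
    field_simp
  simp only [hscale, div_mul_eq_mul_div, ← sum_div, sum_sub_sq_mul_binomialWeight]
  field_simp

theorem sum_div_sub_pow_four_mul_binomialWeight_le (hp₀ : 0 ≤ p) (hp₁ : p ≤ 1)
    (hn : n ≠ 0) :
    ∑ k ∈ range (n + 1), ((k : ℝ) / n - p) ^ 4 * binomialWeight n p k ≤ 1 / n ^ 2 := by
  have hn' : (1 : ℝ) ≤ n := Nat.one_le_cast.mpr (Nat.one_le_iff_ne_zero.mpr hn)
  have hscale (k : ℕ) : ((k : ℝ) / n - p) ^ 4 = ((k : ℝ) - n * p) ^ 4 / n ^ 4 := by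
    field_simp
  simp only [hscale, div_mul_eq_mul_div, ← sum_div, sum_sub_pow_four_mul_binomialWeight]
  have hmoment : 3 * n ^ 2 * p ^ 2 * (1 - p) ^ 2 + n * p * (1 - p) * (1 - 6 * p * (1 - p)) ≤
      (n : ℝ) ^ 2 := by
    have hpq₀ : 0 ≤ p * (1 - p) := mul_nonneg hp₀ (sub_nonneg.mpr hp₁)
    have hpq₁ : p * (1 - p) ≤ 1 / 4 := by nlinarith [sq_nonneg (2 * p - 1)]
    nlinarith [mul_le_mul hpq₁ hpq₁ hpq₀ (by norm_num), mul_nonneg hpq₀ hpq₀]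
  calc _ ≤ (n : ℝ) ^ 2 / n ^ 4 := by gcongr
    _ = 1 / n ^ 2 := by field_simp

theorem sq_mul_sum_abs_div_sub_pow_three_mul_binomialWeight_le (hp₀ : 0 ≤ p)
    (hp₁ : p ≤ 1) (hn : n ≠ 0) :
    (n * ∑ k ∈ range (n + 1), |(k : ℝ) / n - p| ^ 3 * binomialWeight n p k) ^ 2 ≤ 1 / n := by
  have hCS := sum_sq_le_sum_mul_sum_of_sq_le_mul (range (n + 1))
    (r := fun k => |(k : ℝ) / n - p| ^ 3 * binomialWeight n p k)
    (f := fun k => ((k : ℝ) / n - p) ^ 2 * binomialWeight n p k)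
    (g := fun k => ((k : ℝ) / n - p) ^ 4 * binomialWeight n p k)
    (fun k _ => mul_nonneg (sq_nonneg _) (binomialWeight_nonneg n p hp₀ hp₁ k))
    (fun k _ => mul_nonneg (by positivity) (binomialWeight_nonneg n p hp₀ hp₁ k))
    (fun k _ => le_of_eq (by
      rw [mul_pow, ← pow_mul, show 3 * 2 = 2 * 3 from rfl, pow_mul, sq_abs]; ring))
  rw [sum_div_sub_sq_mul_binomialWeight n p hn] at hCS
  have hn' : (0 : ℝ) < n := Nat.cast_pos.mpr (Nat.pos_of_ne_zero hn)
  calc _ = (n : ℝ) ^ 2 * (∑ k ∈ range (n + 1), |(k : ℝ) / n - p| ^ 3 * binomialWeight n p k) ^ 2 :=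
        mul_pow _ _ _
    _ ≤ (n : ℝ) ^ 2 * (p * (1 - p) / n * (1 / n ^ 2)) := by
        gcongr
        exact hCS.trans (by gcongr; exact sum_div_sub_pow_four_mul_binomialWeight_le n p hp₀ hp₁ hn)
    _ = p * (1 - p) / n := by field_simp
    _ ≤ 1 / n := by gcongr; nlinarith

end binomialWeight

theorem abs_mul_sum_sq_sqrt_sub_sqrt_mul_binomialWeight_sub_le {n : ℕ} {p : ℝ} (hp₀ : 0 < p)
    (hp₁ : p ≤ 1) (hn : n ≠ 0) :
    |n * ∑ k ∈ range (n + 1), (√(k / n) - √p) ^ 2 * binomialWeight n p k - (1 - p) / 4| ≤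
      3 / (4 * p ^ 2) * √(1 / n) := by
  have hw := binomialWeight_nonneg n p hp₀.le hp₁
  have hcenter : n * ∑ k ∈ range (n + 1), (√(k / n) - √p) ^ 2 * binomialWeight n p k
      - (1 - p) / 4 = n * ∑ k ∈ range (n + 1),
        ((√(k / n) - √p) ^ 2 - ((k : ℝ) / n - p) ^ 2 / (4 * p)) * binomialWeight n p k := by
    have hvar := sum_div_sub_sq_mul_binomialWeight n p hn
    simp only [sub_mul, sum_sub_distrib, div_mul_eq_mul_div _ (4 * p), ← sum_div, hvar]
    field_simp
  have hcube := sq_mul_sum_abs_div_sub_pow_three_mul_binomialWeight_le n p hp₀.le hp₁ hn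
  rw [hcenter, abs_mul, Nat.abs_cast]
  calc _ ≤ (n : ℝ) * ∑ k ∈ range (n + 1), 3 / (4 * p ^ 2) * |(k : ℝ) / n - p| ^ 3 *
        binomialWeight n p k := by
        gcongr
        refine (abs_sum_le_sum_abs _ _).trans (sum_le_sum fun k _ => ?_)
        rw [abs_mul, abs_of_nonneg (hw k)]
        exact mul_le_mul_of_nonneg_right
          (abs_sq_sqrt_sub_sqrt_sub_sq_div_le (by positivity) hp₀) (hw k)
    _ = 3 / (4 * p ^ 2) * (n * ∑ k ∈ range (n + 1), |(k : ℝ) / n - p| ^ 3 *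
        binomialWeight n p k) := by
        simp only [mul_assoc, ← mul_sum]; ring
    _ ≤ 3 / (4 * p ^ 2) * √(1 / n) := by
        gcongr
        exact Real.le_sqrt_of_sq_le hcube

theorem stmt13 (p : ℝ) (hp : p ∈ Set.Ioo (0 : ℝ) 1) :
    Tendsto (fun n : ℕ =>
        (n : ℝ) * ∑ m ∈ Finset.range (n + 1),
          (Real.sqrt (m / n) - Real.sqrt p) ^ 2 *
            ((n.choose m : ℝ) * p ^ m * (1 - p) ^ (n - m)))
      atTop (nhds ((1 - p) / 4)) := by
  have hbound : ∀ᶠ n : ℕ in atTop,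
      ‖(n : ℝ) * ∑ m ∈ range (n + 1), (√(m / n) - √p) ^ 2 * binomialWeight n p m - (1 - p) / 4‖
        ≤ 3 / (4 * p ^ 2) * √(1 / n) :=
    (eventually_ne_atTop 0).mono fun n hn =>
      abs_mul_sum_sq_sqrt_sub_sqrt_mul_binomialWeight_sub_le hp.1 hp.2.le hn
  have hdecay : Tendsto (fun n : ℕ => 3 / (4 * p ^ 2) * √(1 / n)) atTop (nhds 0) := by
    simpa using (tendsto_one_div_atTop_nhds_zero_nat.sqrt).const_mul (3 / (4 * p ^ 2))
  exact tendsto_sub_nhds_zero_iff.mp (squeeze_zero_norm' hbound hdecay)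
end

section
/- Let p, q > 0 with p + q < 1, and let (S_n, T_n) be the counts of outcomes 1 and 2 in n i.i.d. trials of a trinomial distribution with cell probabilities (p, q, 1-p-q). Define e_n = E[(√(S_n/n) - √p)(√(T_n/n) - √q)]. Then n·e_n → -√(pq)/4 as n → ∞. -/
open Filter Finset

/-!
Write `U = S_n/n - p` and `V = T_n/n - q`. Since `√(S_n/n) - √p = U / (√(S_n/n) + √p)`, the
product `(√(S_n/n) - √p)(√(T_n/n) - √q)` is `UV / (4√(pq))` up to a remainder of size
`O(|UV|(|U| + |V|))`. The main term has expectation `-√(pq)/(4n)` because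
`Cov(S_n, T_n) = -npq`. By AM-GM with weight `√n`, `U²|V| ≤ (√n U⁴ + V²/√n)/2`, so the remainder
has expectation `O(√n E[U⁴] + E[V²]/√n) = O(n^(-3/2))` by the binomial moments
`E[U²] = p(1-p)/n` and `E[U⁴] = O(n⁻²)`. These moments follow from the recursion
`E[S_n f(S_n, T_n)] = np E[f(S_{n-1} + 1, T_{n-1})]`.
-/

theorem abs_sub_mul_sub_sub_le {a b x y : ℝ} (ha : 0 < a) (hb : 0 < b) (ha1 : a ≤ 1)
    (hb1 : b ≤ 1) (hx : 0 ≤ x) (hy : 0 ≤ y) (hy1 : y ≤ 1) :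
    |(x - a) * (y - b) - (x ^ 2 - a ^ 2) * (y ^ 2 - b ^ 2) / (4 * a * b)| ≤
      |x ^ 2 - a ^ 2| * |y ^ 2 - b ^ 2| * (|x ^ 2 - a ^ 2| + |y ^ 2 - b ^ 2|) /
        (2 * a ^ 3 * b ^ 3) := by
  have hU : |x - a| * a ≤ |x ^ 2 - a ^ 2| := by
    rw [show x ^ 2 - a ^ 2 = (x - a) * (x + a) by ring, abs_mul,
      abs_of_pos (by linarith : 0 < x + a)]
    exact mul_le_mul_of_nonneg_left (by linarith) (abs_nonneg _)
  have hV : |y - b| * b ≤ |y ^ 2 - b ^ 2| := by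
    rw [show y ^ 2 - b ^ 2 = (y - b) * (y + b) by ring, abs_mul,
      abs_of_pos (by linarith : 0 < y + b)]
    exact mul_le_mul_of_nonneg_left (by linarith) (abs_nonneg _)
  have hsplit : |(x - a) * (y + b) + 2 * a * (y - b)| ≤ |x - a| * 2 + 2 * a * |y - b| := by
    refine (abs_add_le _ _).trans ?_
    rw [abs_mul, abs_mul, abs_of_pos (by linarith : 0 < y + b),
      abs_of_pos (by positivity : 0 < 2 * a)]
    gcongr
    linarith
  -- `(x - a)(y - b) = (x² - a²)(y² - b²) / ((x + a)(y + b))` and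
  -- `4ab - (x + a)(y + b) = -((x - a)(y + b) + 2a(y - b))`
  have hrem : (x - a) * (y - b) - (x ^ 2 - a ^ 2) * (y ^ 2 - b ^ 2) / (4 * a * b) =
      -((x - a) * (y - b) * ((x - a) * (y + b) + 2 * a * (y - b))) / (4 * a * b) := by
    field_simp
    ring
  rw [hrem, abs_div, abs_neg, abs_mul, abs_mul, abs_of_pos (by positivity : 0 < 4 * a * b),
    div_le_div_iff₀ (by positivity) (by positivity)]
  set A := |x - a|
  set B := |y - b|
  set U := |x ^ 2 - a ^ 2|
  set V := |y ^ 2 - b ^ 2|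
  calc A * B * |(x - a) * (y + b) + 2 * a * (y - b)| * (2 * a ^ 3 * b ^ 3)
      ≤ A * B * (A * 2 + 2 * a * B) * (2 * a ^ 3 * b ^ 3) := by gcongr
    _ = 2 * a * b * (2 * b * ((A * a) ^ 2 * (B * b)) + 2 * a ^ 2 * ((A * a) * (B * b) ^ 2)) := by
      ring
    _ ≤ 2 * a * b * (2 * 1 * (U ^ 2 * V) + 2 * 1 * (U * V ^ 2)) := by
      have ha2 : a ^ 2 ≤ 1 := pow_le_one₀ ha.le ha1
      gcongr
    _ = U * V * (U + V) * (4 * a * b) := by ring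

theorem mul_le_add_div_two {t : ℝ} (ht : 0 < t) (u v : ℝ) :
    u * v ≤ (t * u ^ 2 + v ^ 2 / t) / 2 := by
  rw [le_div_iff₀ two_pos, ← mul_le_mul_iff_of_pos_left ht]
  field_simp
  nlinarith [sq_nonneg (t * u - v)]

theorem binomial_fourth_central_moment_le {n : ℕ} {p : ℝ} (hp0 : 0 ≤ p) (hp1 : p ≤ 1)
    (hn : n ≠ 0) :
    p * (1 - p) * (3 * (n - 2) * p * (1 - p) + 1) / n ^ 3 ≤ 1 / n ^ 2 := by
  have hn1 : (1 : ℝ) ≤ n := by exact_mod_cast Nat.one_le_iff_ne_zero.2 hn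
  have hs0 : 0 ≤ p * (1 - p) := mul_nonneg hp0 (by linarith)
  have hs1 : p * (1 - p) ≤ 1 / 4 := by nlinarith [sq_nonneg (p - 1 / 2)]
  have hs2 : (p * (1 - p)) ^ 2 ≤ 1 / 16 := by nlinarith
  have hnum : p * (1 - p) * (3 * (n - 2) * p * (1 - p) + 1) ≤ n := by
    nlinarith [mul_le_mul_of_nonneg_left hs2 (by linarith : (0 : ℝ) ≤ n)]
  calc p * (1 - p) * (3 * (n - 2) * p * (1 - p) + 1) / (n : ℝ) ^ 3 ≤ n / (n : ℝ) ^ 3 := by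
        gcongr
    _ = 1 / (n : ℝ) ^ 2 := by field_simp

namespace Trinomial

noncomputable def weight (p q : ℝ) (n i j : ℕ) : ℝ :=
  (n.factorial : ℝ) / (i.factorial * j.factorial * (n - i - j).factorial) *
    p ^ i * q ^ j * (1 - p - q) ^ (n - i - j)

noncomputable def expect (p q : ℝ) (n : ℕ) (f : ℕ → ℕ → ℝ) : ℝ :=
  ∑ i ∈ range (n + 1), ∑ j ∈ range (n + 1 - i), f i j * weight p q n i j

variable (p q : ℝ) (n : ℕ)

theorem expect_add (f g : ℕ → ℕ → ℝ) :
    expect p q n (fun i j => f i j + g i j) = expect p q n f + expect p q n g := by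
  simp only [expect, add_mul, sum_add_distrib]

theorem expect_const_mul (c : ℝ) (f : ℕ → ℕ → ℝ) :
    expect p q n (fun i j => c * f i j) = c * expect p q n f := by
  simp only [expect, mul_sum, mul_assoc]

theorem expect_swap (f : ℕ → ℕ → ℝ) :
    expect p q n f = expect q p n (fun i j => f j i) := by
  unfold expect
  rw [sum_comm' (t' := range (n + 1)) (s' := fun j => range (n + 1 - j))
    fun i j => by simp only [mem_range]; omega]
  refine sum_congr rfl fun j _ => sum_congr rfl fun i _ => ?_
  rw [weight, weight, Nat.sub_right_comm n i j, mul_right_comm _ (p ^ i), sub_right_comm 1 p q]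
  simp only [mul_comm (i.factorial : ℝ)]

theorem weight_eq_choose {i j : ℕ} (h : i + j ≤ n) :
    weight p q n i j =
      n.choose i * (n - i).choose j * p ^ i * q ^ j * (1 - p - q) ^ (n - i - j) := by
  have hi : i.factorial * (n - i).factorial * n.choose i = n.factorial := by
    rw [mul_comm, ← mul_assoc]; exact Nat.choose_mul_factorial_mul_factorial (by omega)
  have hj : j.factorial * (n - i - j).factorial * (n - i).choose j = (n - i).factorial := by
    rw [mul_comm, ← mul_assoc]; exact Nat.choose_mul_factorial_mul_factorial (by omega)
  rw [weight, ← hi, ← hj]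
  push_cast
  field_simp

theorem expect_one : expect p q n (fun _ _ => 1) = 1 := by
  have inner : ∀ i ∈ range (n + 1), ∑ j ∈ range (n + 1 - i), 1 * weight p q n i j
      = p ^ i * (1 - p) ^ (n - i) * n.choose i := by
    intro i hi
    rw [mem_range] at hi
    rw [show n + 1 - i = n - i + 1 by omega, show 1 - p = q + (1 - p - q) by ring, add_pow,
      mul_sum, sum_mul]
    refine sum_congr rfl fun j hj => ?_
    rw [mem_range] at hj
    rw [weight_eq_choose p q n (by omega), Nat.sub_sub]
    ring
  rw [expect, sum_congr rfl inner, ← add_pow]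
  simp

theorem succ_mul_weight_succ_left {i j : ℕ} (h : i + j ≤ n) :
    (i + 1) * weight p q (n + 1) (i + 1) j = (n + 1) * p * weight p q n i j := by
  rw [weight, weight, show n + 1 - (i + 1) - j = n - i - j by omega, Nat.factorial_succ,
    Nat.factorial_succ]
  push_cast
  field_simp
  ring

theorem expect_natCast_mul (f : ℕ → ℕ → ℝ) :
    expect p q (n + 1) (fun i j => i * f i j) =
      (n + 1) * p * expect p q n (fun i j => f (i + 1) j) := by
  rw [expect, sum_range_succ', expect, mul_sum]
  simp only [Nat.cast_zero, zero_mul, sum_const_zero, add_zero]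
  refine sum_congr rfl fun i hi => ?_
  rw [mem_range] at hi
  rw [show n + 1 + 1 - (i + 1) = n + 1 - i by omega, mul_sum]
  refine sum_congr rfl fun j hj => ?_
  rw [mem_range] at hj
  push_cast
  linear_combination f (i + 1) j * succ_mul_weight_succ_left p q n (by omega : i + j ≤ n)

theorem expect_const (c : ℝ) : expect p q n (fun _ _ => c) = c := by
  simpa only [mul_one, expect_one] using expect_const_mul p q n c fun _ _ => 1

theorem expect_fst : expect p q n (fun i _ => (i : ℝ)) = n * p := by
  cases n with
  | zero => simp [expect]
  | succ n =>
    simpa [expect_one] using expect_natCast_mul p q n fun _ _ => 1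

theorem expect_snd : expect p q n (fun _ j => (j : ℝ)) = n * q :=
  (expect_swap p q n _).trans (expect_fst q p n)

theorem expect_fst_mul_snd : expect p q n (fun i j => (i : ℝ) * j) = n * (n - 1) * p * q := by
  cases n with
  | zero => simp [expect]
  | succ n =>
    rw [expect_natCast_mul, expect_snd]
    push_cast
    ring

theorem expect_fst_sq :
    expect p q n (fun i _ => (i : ℝ) ^ 2) = n * p + n * (n - 1) * p ^ 2 := by
  cases n with
  | zero => simp [expect]
  | succ n =>
    simp only [sq, expect_natCast_mul, Nat.cast_succ, expect_add, expect_fst, expect_one]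
    ring

theorem expect_fst_pow_three :
    expect p q n (fun i _ => (i : ℝ) ^ 3) =
      n * p + 3 * n * (n - 1) * p ^ 2 + n * (n - 1) * (n - 2) * p ^ 3 := by
  cases n with
  | zero => simp [expect]
  | succ n =>
    have h (x : ℝ) : (x + 1) ^ 2 = x ^ 2 + (2 * x + 1) := by ring
    simp only [pow_succ' _ 2, expect_natCast_mul, Nat.cast_succ, h, expect_add,
      expect_const_mul, expect_fst_sq, expect_fst, expect_one]
    ring

theorem expect_fst_pow_four :
    expect p q n (fun i _ => (i : ℝ) ^ 4) =
      n * p + 7 * n * (n - 1) * p ^ 2 + 6 * n * (n - 1) * (n - 2) * p ^ 3 +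
        n * (n - 1) * (n - 2) * (n - 3) * p ^ 4 := by
  cases n with
  | zero => simp [expect]
  | succ n =>
    have h (x : ℝ) : (x + 1) ^ 3 = x ^ 3 + (3 * x ^ 2 + (3 * x + 1)) := by ring
    simp only [pow_succ' _ 3, expect_natCast_mul, Nat.cast_succ, h, expect_add,
      expect_const_mul, expect_fst_pow_three, expect_fst_sq, expect_fst, expect_one]
    ring

variable {n}

theorem expect_centered_mul_centered (hn : n ≠ 0) :
    expect p q n (fun i j => ((i : ℝ) / n - p) * ((j : ℝ) / n - q)) = -(p * q) / n := by
  have h (x y : ℝ) : (x / n - p) * (y / n - q) =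
      1 / n ^ 2 * (x * y) + (-q / n * x + (-p / n * y + p * q)) := by ring
  simp only [h, expect_add, expect_const_mul, expect_const, expect_fst_mul_snd, expect_fst,
    expect_snd]
  field_simp
  ring

theorem expect_fst_centered_sq (hn : n ≠ 0) :
    expect p q n (fun i _ => ((i : ℝ) / n - p) ^ 2) = p * (1 - p) / n := by
  have h (x : ℝ) : (x / n - p) ^ 2 = 1 / n ^ 2 * x ^ 2 + (-2 * p / n * x + p ^ 2) := by ring
  simp only [h, expect_add, expect_const_mul, expect_const, expect_fst_sq, expect_fst]
  field_simp
  ring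

theorem expect_fst_centered_pow_four (hn : n ≠ 0) :
    expect p q n (fun i _ => ((i : ℝ) / n - p) ^ 4) =
      p * (1 - p) * (3 * (n - 2) * p * (1 - p) + 1) / n ^ 3 := by
  have h (x : ℝ) : (x / n - p) ^ 4 = 1 / n ^ 4 * x ^ 4 + (-4 * p / n ^ 3 * x ^ 3 +
      (6 * p ^ 2 / n ^ 2 * x ^ 2 + (-4 * p ^ 3 / n * x + p ^ 4))) := by ring
  simp only [h, expect_add, expect_const_mul, expect_const, expect_fst_pow_four,
    expect_fst_pow_three, expect_fst_sq, expect_fst]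
  field_simp
  ring

theorem expect_snd_centered_sq (hn : n ≠ 0) :
    expect p q n (fun _ j => ((j : ℝ) / n - q) ^ 2) = q * (1 - q) / n :=
  (expect_swap p q n _).trans (expect_fst_centered_sq q p hn)

theorem expect_snd_centered_pow_four (hn : n ≠ 0) :
    expect p q n (fun _ j => ((j : ℝ) / n - q) ^ 4) =
      q * (1 - q) * (3 * (n - 2) * q * (1 - q) + 1) / n ^ 3 :=
  (expect_swap p q n _).trans (expect_fst_centered_pow_four q p hn)

variable {p q}

theorem weight_nonneg (hp : 0 ≤ p) (hq : 0 ≤ q) (hpq : p + q ≤ 1) (n i j : ℕ) :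
    0 ≤ weight p q n i j := by
  have : 0 ≤ 1 - p - q := by linarith
  unfold weight
  positivity

theorem abs_expect_le (hp : 0 ≤ p) (hq : 0 ≤ q) (hpq : p + q ≤ 1) {f g : ℕ → ℕ → ℝ}
    (h : ∀ i j, i + j ≤ n → |f i j| ≤ g i j) : |expect p q n f| ≤ expect p q n g := by
  refine (abs_sum_le_sum_abs _ _).trans (sum_le_sum fun i hi => ?_)
  refine (abs_sum_le_sum_abs _ _).trans (sum_le_sum fun j hj => ?_)
  rw [mem_range] at hi hj
  rw [abs_mul, abs_of_nonneg (weight_nonneg hp hq hpq n i j)]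
  exact mul_le_mul_of_nonneg_right (h i j (by omega)) (weight_nonneg hp hq hpq n i j)

theorem abs_expect_sqrt_remainder_le (hp : 0 < p) (hq : 0 < q) (hpq : p + q ≤ 1)
    (hn : n ≠ 0) :
    |expect p q n (fun i j => (√((i : ℝ) / n) - √p) * (√((j : ℝ) / n) - √q) -
        ((i : ℝ) / n - p) * ((j : ℝ) / n - q) / (4 * √p * √q))| ≤
      1 / (√p ^ 3 * √q ^ 3) / (n * √n) := by
  have hn0 : (0 : ℝ) < n := by positivity
  set t := √(n : ℝ)
  have ht0 : 0 < t := Real.sqrt_pos.2 hn0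
  have ha : 0 < √p := Real.sqrt_pos.2 hp
  have hb : 0 < √q := Real.sqrt_pos.2 hq
  set K := 1 / (4 * √p ^ 3 * √q ^ 3) with hK
  have hpt : ∀ i j, i + j ≤ n →
      |(√((i : ℝ) / n) - √p) * (√((j : ℝ) / n) - √q) -
          ((i : ℝ) / n - p) * ((j : ℝ) / n - q) / (4 * √p * √q)| ≤
        K * t * ((i : ℝ) / n - p) ^ 4 + (K * t * ((j : ℝ) / n - q) ^ 4 +
          (K / t * ((i : ℝ) / n - p) ^ 2 + K / t * ((j : ℝ) / n - q) ^ 2)) := by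
    intro i j hij
    have hj : (j : ℝ) / n ≤ 1 :=
      div_le_one_of_le₀ (by exact_mod_cast (by omega : j ≤ n)) hn0.le
    have h := abs_sub_mul_sub_sub_le ha hb (Real.sqrt_le_one.2 (by linarith))
      (Real.sqrt_le_one.2 (by linarith)) (Real.sqrt_nonneg ((i : ℝ) / n))
      (Real.sqrt_nonneg ((j : ℝ) / n)) (Real.sqrt_le_one.2 hj)
    rw [Real.sq_sqrt (by positivity : (0 : ℝ) ≤ i / n),
      Real.sq_sqrt (by positivity : (0 : ℝ) ≤ j / n), Real.sq_sqrt hp.le,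
      Real.sq_sqrt hq.le] at h
    refine h.trans ?_
    set U := (i : ℝ) / n - p
    set V := (j : ℝ) / n - q
    have hUV := mul_le_add_div_two ht0 (|U| ^ 2) |V|
    have hVU := mul_le_add_div_two ht0 (|V| ^ 2) |U|
    rw [div_le_iff₀ (by positivity)]
    calc |U| * |V| * (|U| + |V|) = |U| ^ 2 * |V| + |V| ^ 2 * |U| := by ring
      _ ≤ (t * (|U| ^ 2) ^ 2 + |V| ^ 2 / t) / 2 + (t * (|V| ^ 2) ^ 2 + |U| ^ 2 / t) / 2 :=
        add_le_add hUV hVU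
      _ = _ := by
        rw [sq_abs, sq_abs, hK]
        field_simp
        ring
  refine (abs_expect_le hp.le hq.le hpq hpt).trans ?_
  simp only [expect_add, expect_const_mul, expect_fst_centered_pow_four p q hn,
    expect_snd_centered_pow_four p q hn, expect_fst_centered_sq p q hn,
    expect_snd_centered_sq p q hn]
  have h4p := binomial_fourth_central_moment_le hp.le (by linarith) hn
  have h4q := binomial_fourth_central_moment_le hq.le (by linarith) hn
  have h2p : p * (1 - p) / n ≤ 1 / n := by gcongr; nlinarith
  have h2q : q * (1 - q) / n ≤ 1 / n := by gcongr; nlinarith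
  have ht2 : t ^ 2 = n := Real.sq_sqrt hn0.le
  calc _ ≤ K * t * (1 / n ^ 2) + (K * t * (1 / n ^ 2) + (K / t * (1 / n) + K / t * (1 / n))) :=
        by gcongr
    _ = _ := by
      rw [hK, ← ht2]
      field_simp
      ring

theorem abs_natCast_mul_expect_sqrt_add_le (hp : 0 < p) (hq : 0 < q) (hpq : p + q ≤ 1)
    (hn : n ≠ 0) :
    |n * expect p q n (fun i j => (√((i : ℝ) / n) - √p) * (√((j : ℝ) / n) - √q)) +
        √(p * q) / 4| ≤ 1 / (√p ^ 3 * √q ^ 3) / √n := by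
  have hn0 : (0 : ℝ) < n := by positivity
  set R := expect p q n (fun i j => (√((i : ℝ) / n) - √p) * (√((j : ℝ) / n) - √q) -
    ((i : ℝ) / n - p) * ((j : ℝ) / n - q) / (4 * √p * √q))
  have hsplit :
      expect p q n (fun i j => (√((i : ℝ) / n) - √p) * (√((j : ℝ) / n) - √q)) =
        1 / (4 * √p * √q) * (-(p * q) / n) + R := by
    rw [← expect_centered_mul_centered p q hn, ← expect_const_mul, ← expect_add]
    congr 1
    ext i j
    ring
  have hlead : (n : ℝ) * (1 / (4 * √p * √q) * (-(p * q) / n)) = -√(p * q) / 4 := by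
    rw [Real.sqrt_mul hp.le]
    field_simp
    rw [Real.sq_sqrt hp.le, Real.sq_sqrt hq.le]
  rw [hsplit, mul_add, hlead, neg_div, neg_add_cancel_comm, abs_mul, abs_of_pos hn0]
  calc (n : ℝ) * |R| ≤ n * (1 / (√p ^ 3 * √q ^ 3) / (n * √n)) :=
        mul_le_mul_of_nonneg_left (abs_expect_sqrt_remainder_le hp hq hpq hn) hn0.le
    _ = 1 / (√p ^ 3 * √q ^ 3) / √n := by field_simp

end Trinomial

theorem stmt14 (p q : ℝ) (hp : 0 < p) (hq : 0 < q) (hpq : p + q < 1) :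
    Tendsto (fun n : ℕ =>
        (n : ℝ) * ∑ m1 ∈ Finset.range (n + 1), ∑ m2 ∈ Finset.range (n + 1 - m1),
          (Real.sqrt (m1 / n) - Real.sqrt p) * (Real.sqrt (m2 / n) - Real.sqrt q) *
            ((Nat.factorial n : ℝ) /
                (Nat.factorial m1 * Nat.factorial m2 * Nat.factorial (n - m1 - m2)) *
              p ^ m1 * q ^ m2 * (1 - p - q) ^ (n - m1 - m2)))
      atTop (nhds (-Real.sqrt (p * q) / 4)) := by
  change Tendsto (fun n : ℕ => (n : ℝ) * Trinomial.expect p q n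
    (fun i j => (√((i : ℝ) / n) - √p) * (√((j : ℝ) / n) - √q))) atTop _
  rw [← tendsto_sub_nhds_zero_iff]
  refine squeeze_zero_norm' (a := fun n : ℕ => 1 / (√p ^ 3 * √q ^ 3) / √(n : ℝ)) ?_
    (tendsto_const_nhds.div_atTop (Real.tendsto_sqrt_atTop.comp tendsto_natCast_atTop_atTop))
  filter_upwards [eventually_ne_atTop 0] with n hn
  rw [Real.norm_eq_abs, neg_div, sub_neg_eq_add]
  exact Trinomial.abs_natCast_mul_expect_sqrt_add_le hp hq hpq.le hn
end
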